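/- For any positive integers r, m, n, every coefficient of the one-variable polynomial ∑_{k=0}^{n-1} (2k+1) · S_k^{(r)}(x)^m is divisible by n, where S_n^{(r)}(x) := ∑_{k=0}^{n} C(n,k)^r · C(n+k,k)^r · x^k. -/

import Mathlib

/-!
Write `U a k = C(k,a) C(k+a,a)` (`schmidtCoeff`), so that the coefficient of `x^a` in
`S_k^{(r)}` is `U a k ^ r`. The linearization formula
`U a * U b = ∑ c, C(c,a) C(c,b) C(a+b,c) • U c`, proved by induction on `a` from the recurrence
`(a+1)^2 U (a+1) k = (k(k+1) - a(a+1)) U a k`, shows that the integer span of the functions `U a`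
is a subring of `ℕ → ℤ`. Hence it contains `k ↦ [x^d] S_k^{(r)}(x)^m`. On the other hand
`∑_{k<n} (2k+1) U a k = n C(n,a+1) C(n+a,a)` is a multiple of `n`, and this passes to the whole
span by linearity.
-/

/-- The one-variable Schmidt polynomial
`S_n^{(r)}(x) := ∑_{k=0}^{n} C(n,k)^r · C(n+k,k)^r · x^k`. -/
noncomputable def schmidtPoly (r n : ℕ) : Polynomial ℤ :=
  ∑ k ∈ Finset.range (n + 1),
    Polynomial.C (((n.choose k) ^ r * ((n + k).choose k) ^ r : ℕ) : ℤ) * Polynomial.X ^ k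

open Finset Polynomial

theorem Nat.cast_choose_succ_right_eq {R : Type*} [CommRing R] (n k : ℕ) :
    (n.choose (k + 1) : R) * (k + 1) = n.choose k * (n - k) := by
  rcases le_or_gt k n with h | h
  · have := congrArg (Nat.cast : ℕ → R) (Nat.choose_succ_right_eq n k)
    push_cast [h] at this
    exact this
  · simp [Nat.choose_eq_zero_of_lt h, Nat.choose_eq_zero_of_lt (h.trans k.lt_succ_self)]

theorem Nat.cast_choose_mul_succ_eq {R : Type*} [CommRing R] (n k : ℕ) :
    (n.choose k : R) * (n + 1) = (n + 1).choose k * (n + 1 - k) := by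
  rcases le_or_gt k (n + 1) with h | h
  · have := congrArg (Nat.cast : ℕ → R) (Nat.choose_mul_succ_eq n k)
    push_cast [h] at this
    exact this
  · simp [Nat.choose_eq_zero_of_lt h, Nat.choose_eq_zero_of_lt ((n.lt_succ_self).trans h)]

theorem Finset.sum_range_succ_shift_of_eq_zero {M : Type*} [AddCommMonoid M] {g : ℕ → M}
    {n : ℕ} (h₀ : g 0 = 0) (hn : g n = 0) :
    ∑ i ∈ range n, g (i + 1) = ∑ i ∈ range n, g i := by
  have := (sum_range_succ' g n).symm.trans (sum_range_succ g n)
  rwa [h₀, hn, add_zero, add_zero] at this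

def schmidtCoeff (a k : ℕ) : ℤ := k.choose a * (k + a).choose a

theorem schmidtCoeff_zero_left : schmidtCoeff 0 = 1 := by
  ext
  simp [schmidtCoeff]

theorem sq_mul_schmidtCoeff_succ (a k : ℕ) :
    ((a : ℤ) + 1) ^ 2 * schmidtCoeff (a + 1) k =
      ((k : ℤ) * (k + 1) - a * (a + 1)) * schmidtCoeff a k := by
  have e₁ := Nat.cast_choose_succ_right_eq (R := ℤ) k a
  have e₂ : ((k + a + 1 : ℕ) : ℤ) * (k + a).choose a = (k + a + 1).choose (a + 1) * (a + 1) := by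
    exact_mod_cast Nat.add_one_mul_choose_eq (k + a) a
  push_cast at e₂
  unfold schmidtCoeff
  rw [← add_assoc]
  linear_combination (((k + a + 1).choose (a + 1) : ℕ) : ℤ) * (a + 1) * e₁
    - k.choose a * (k - a) * e₂

theorem sum_range_odd_mul_schmidtCoeff (a n : ℕ) :
    ∑ k ∈ range n, (2 * (k : ℤ) + 1) * schmidtCoeff a k =
      n * (n.choose (a + 1) * (n + a).choose a) := by
  induction n with
  | zero => simp
  | succ n ih =>
    have e₁ := Nat.cast_choose_succ_right_eq (R := ℤ) n a
    have e₂ : ((n + 1 : ℕ) : ℤ) * n.choose a = (n + 1).choose (a + 1) * (a + 1) := by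
      exact_mod_cast Nat.add_one_mul_choose_eq n a
    have e₃ := Nat.cast_choose_mul_succ_eq (R := ℤ) (n + a) a
    rw [sum_range_succ, ih, show n + 1 + a = n + a + 1 by omega]
    unfold schmidtCoeff
    push_cast at e₂ e₃ ⊢
    refine mul_left_cancel₀ (mul_ne_zero (by positivity : (a : ℤ) + 1 ≠ 0)
      (by positivity : (n : ℤ) + 1 ≠ 0)) ?_
    linear_combination ((n : ℤ) + 1) * ((n + a).choose a) * n * e₁
      + ((n : ℤ) + 1) ^ 2 * ((n + a + 1).choose a) * e₂ + ((n : ℤ) + 1) ^ 2 * (n.choose a) * e₃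

def schmidtLinCoeff (a b c : ℕ) : ℤ := c.choose a * c.choose b * (a + b).choose c

theorem schmidtLinCoeff_of_lt {a b c : ℕ} (h : a + b < c) : schmidtLinCoeff a b c = 0 := by
  simp [schmidtLinCoeff, Nat.choose_eq_zero_of_lt h]

theorem schmidtLinCoeff_succ_zero (a b : ℕ) : schmidtLinCoeff (a + 1) b 0 = 0 := by
  simp [schmidtLinCoeff]

theorem sq_mul_schmidtLinCoeff_succ_succ (a b c : ℕ) :
    ((a : ℤ) + 1) ^ 2 * schmidtLinCoeff (a + 1) b (c + 1) =
      ((c : ℤ) + 1) ^ 2 * schmidtLinCoeff a b c +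
        (((c : ℤ) + 1) * (c + 2) - a * (a + 1)) * schmidtLinCoeff a b (c + 1) := by
  have h₁ := Nat.cast_choose_succ_right_eq (R := ℤ) (c + 1) a
  have h₂ := Nat.cast_choose_mul_succ_eq (R := ℤ) c a
  have h₃ := Nat.cast_choose_mul_succ_eq (R := ℤ) c b
  have h₄ := Nat.cast_choose_succ_right_eq (R := ℤ) (a + b) c
  have hP : ((a + b + 1).choose (c + 1) : ℤ) = (a + b).choose c + (a + b).choose (c + 1) := by
    exact_mod_cast Nat.choose_succ_succ' (a + b) c
  unfold schmidtLinCoeff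
  rw [show a + 1 + b = a + b + 1 by omega]
  push_cast at h₁ h₂ h₃ h₄ ⊢
  linear_combination ((a : ℤ) + 1) * ((c + 1).choose b) * ((a + b + 1).choose (c + 1)) * h₁
    + ((c + 1).choose a) * ((c : ℤ) + 1 - a) * ((c + 1).choose b) * ((a + 1) * hP - h₄)
    - ((a + b).choose c) * (((c + 1).choose b) * ((c : ℤ) + 1 - b) * h₂
      + ((c : ℤ) + 1) * (c.choose a) * h₃)

theorem schmidtCoeff_mul_schmidtCoeff (a b k : ℕ) :
    schmidtCoeff a k * schmidtCoeff b k =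
      ∑ c ∈ range (a + b + 1), schmidtLinCoeff a b c * schmidtCoeff c k := by
  induction a with
  | zero =>
    rw [sum_eq_single_of_mem b (by simp)]
    · simp [schmidtCoeff_zero_left, schmidtLinCoeff]
    · intro c hc hcb
      have : c < b := lt_of_le_of_ne (by simpa [Nat.lt_succ_iff] using hc) hcb
      simp [schmidtLinCoeff, Nat.choose_eq_zero_of_lt this]
  | succ a ih =>
    let g (c : ℕ) : ℤ :=
      ((c : ℤ) * (c + 1) - a * (a + 1)) * schmidtLinCoeff a b c * schmidtCoeff c k
    have hg₀ : g 0 = 0 := by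
      cases a <;> simp [g, schmidtLinCoeff_succ_zero]
    have hg : g (a + b + 1) = 0 := by
      simp [g, schmidtLinCoeff_of_lt (Nat.lt_succ_self (a + b))]
    refine mul_left_cancel₀ (pow_ne_zero 2 (by positivity : (a : ℤ) + 1 ≠ 0)) ?_
    calc ((a : ℤ) + 1) ^ 2 * (schmidtCoeff (a + 1) k * schmidtCoeff b k)
        = ∑ c ∈ range (a + b + 1), schmidtLinCoeff a b c *
            (((k : ℤ) * (k + 1) - a * (a + 1)) * schmidtCoeff c k) := by
          rw [← mul_assoc, sq_mul_schmidtCoeff_succ, mul_assoc, ih, mul_sum]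
          exact sum_congr rfl fun c _ => by ring
      _ = ∑ c ∈ range (a + b + 1), ((c : ℤ) + 1) ^ 2 * schmidtLinCoeff a b c *
            schmidtCoeff (c + 1) k + ∑ c ∈ range (a + b + 1), g c := by
          rw [← sum_add_distrib]
          refine sum_congr rfl fun c _ => ?_
          linear_combination -schmidtLinCoeff a b c * sq_mul_schmidtCoeff_succ c k
      _ = ∑ c ∈ range (a + b + 1), ((a : ℤ) + 1) ^ 2 * schmidtLinCoeff (a + 1) b (c + 1) *
            schmidtCoeff (c + 1) k := by
          rw [← sum_range_succ_shift_of_eq_zero (g := g) hg₀ hg, ← sum_add_distrib]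
          refine sum_congr rfl fun c _ => ?_
          rw [sq_mul_schmidtLinCoeff_succ_succ]
          push_cast [g]
          ring
      _ = ((a : ℤ) + 1) ^ 2 * ∑ c ∈ range (a + 1 + b + 1),
            schmidtLinCoeff (a + 1) b c * schmidtCoeff c k := by
          rw [show a + 1 + b + 1 = a + b + 1 + 1 by omega,
            sum_range_succ' (fun c ↦ schmidtLinCoeff (a + 1) b c * schmidtCoeff c k),
            schmidtLinCoeff_succ_zero, zero_mul, add_zero, mul_sum]
          exact sum_congr rfl fun c _ => by ring

def schmidtSpan : Submodule ℤ (ℕ → ℤ) := Submodule.span ℤ (Set.range schmidtCoeff)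

theorem schmidtCoeff_mem_schmidtSpan (a : ℕ) : schmidtCoeff a ∈ schmidtSpan :=
  Submodule.subset_span ⟨a, rfl⟩

open scoped Pointwise in
theorem mul_mem_schmidtSpan {f g : ℕ → ℤ} (hf : f ∈ schmidtSpan) (hg : g ∈ schmidtSpan) :
    f * g ∈ schmidtSpan := by
  have hmul : Set.range schmidtCoeff * Set.range schmidtCoeff ⊆ (schmidtSpan : Set (ℕ → ℤ)) := by
    rintro _ ⟨_, ⟨a, rfl⟩, _, ⟨b, rfl⟩, rfl⟩
    show schmidtCoeff a * schmidtCoeff b ∈ schmidtSpan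
    have : schmidtCoeff a * schmidtCoeff b =
        ∑ c ∈ range (a + b + 1), schmidtLinCoeff a b c • schmidtCoeff c := by
      ext k
      simp only [Pi.mul_apply, Finset.sum_apply, Pi.smul_apply, smul_eq_mul]
      exact schmidtCoeff_mul_schmidtCoeff a b k
    rw [this]
    exact sum_mem fun c _ => Submodule.smul_mem _ _ (schmidtCoeff_mem_schmidtSpan c)
  have := Submodule.mul_mem_mul hf hg
  rw [schmidtSpan, Submodule.span_mul_span] at this
  exact Submodule.span_le.mpr hmul this

def schmidtSubalgebra : Subalgebra ℤ (ℕ → ℤ) :=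
  schmidtSpan.toSubalgebra
    (schmidtCoeff_zero_left ▸ schmidtCoeff_mem_schmidtSpan 0)
    fun _ _ => mul_mem_schmidtSpan

theorem dvd_sum_range_odd_mul_of_mem {f : ℕ → ℤ} (hf : f ∈ schmidtSpan) (n : ℕ) :
    (n : ℤ) ∣ ∑ k ∈ range n, (2 * (k : ℤ) + 1) * f k := by
  induction hf using Submodule.span_induction with
  | mem _ h =>
    obtain ⟨a, rfl⟩ := h
    rw [sum_range_odd_mul_schmidtCoeff]
    exact dvd_mul_right _ _
  | zero => simp
  | add f g _ _ hf hg =>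
    simp only [Pi.add_apply, mul_add, sum_add_distrib]
    exact dvd_add hf hg
  | smul c f _ hf =>
    simp only [Pi.smul_apply, smul_eq_mul, mul_left_comm _ c, ← mul_sum]
    exact dvd_mul_of_dvd_right hf c

theorem coeff_schmidtPoly {r : ℕ} (hr : r ≠ 0) (k i : ℕ) :
    (schmidtPoly r k).coeff i = schmidtCoeff i k ^ r := by
  simp only [schmidtPoly, finsetSum_coeff, coeff_C_mul_X_pow, sum_ite_eq, mem_range]
  split_ifs with h
  · push_cast [schmidtCoeff]
    ring
  · simp [schmidtCoeff, Nat.choose_eq_zero_of_lt (by omega : k < i), hr]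

theorem coeff_schmidtPoly_pow_mem {r : ℕ} (hr : r ≠ 0) (m d : ℕ) :
    (fun k => (schmidtPoly r k ^ m).coeff d) ∈ schmidtSubalgebra := by
  induction m generalizing d with
  | zero =>
    simp only [pow_zero, coeff_one]
    split_ifs
    exacts [one_mem _, zero_mem _]
  | succ m ih =>
    have : (fun k => (schmidtPoly r k ^ (m + 1)).coeff d) =
        ∑ x ∈ antidiagonal d,
          (fun k => (schmidtPoly r k ^ m).coeff x.1) * schmidtCoeff x.2 ^ r := by
      ext k
      simp [pow_succ, coeff_mul, coeff_schmidtPoly hr]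
    rw [this]
    exact sum_mem fun x _ =>
      mul_mem (ih x.1)
        (pow_mem (Submodule.mem_toSubalgebra.mpr (schmidtCoeff_mem_schmidtSpan x.2)) r)

theorem sum_schmidtPoly_pow_dvd_general (r m n : ℕ) (hr : 0 < r) :
    ∀ d : ℕ,
      (n : ℤ) ∣ (∑ k ∈ Finset.range n, (2 * (k : ℤ) + 1) • (schmidtPoly r k) ^ m).coeff d := by
  intro d
  simp only [finsetSum_coeff, coeff_smul, smul_eq_mul]
  exact dvd_sum_range_odd_mul_of_mem (coeff_schmidtPoly_pow_mem hr.ne' m d) n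

/-- For any positive integers `r`, `m`, `n`, every coefficient of
`∑_{k=0}^{n-1} (2k+1) · S_k^{(r)}(x)^m` is divisible by `n`. -/
theorem sum_schmidtPoly_pow_dvd (r m n : ℕ) (hr : 0 < r) (hm : 0 < m) (hn : 0 < n) :
    ∀ d : ℕ,
      (n : ℤ) ∣ (∑ k ∈ Finset.range n, (2 * (k : ℤ) + 1) • (schmidtPoly r k) ^ m).coeff d :=
  sum_schmidtPoly_pow_dvd_general r m n hr
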